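/- Let p ≥ 2, n ≥ 1, and (d_{ij})_{1≤i≠j≤p} nonnegative integers with d_{ij}=d_{ji}. With d_{ij}(σ) as the number of agreement points of σ_i and σ_j for σ ∈ {Id}×S_n^{p-1}, we have #{σ : ∀ i≠j, d_{ij}(σ) ≥ d_{ij}} ≤ (n!)^{p-1} / (∏_{1≤i≠j≤p} d_{ij}!)^{1/p}. -/

import Mathlib

/-!
Choose a centre `c` maximising the row product `R c = ∏_{i ≠ c} d_{ci}!`. Recentring a tuple
at `c`, `σ_i ↦ σ_i σ_c⁻¹`, is injective on tuples with `σ_0 = 1` and turns the condition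
`d_{ci}(σ) ≥ d_{ci}` into "the `i`-th entry has at least `d_{ci}` fixed points". At most `n!/k!`
permutations of `n` points fix `k` or more points, so the count is at most `(n!)^{p-1} / R c`,
and `∏_{i ≠ j} d_{ij}! = ∏_c R c ≤ (R c)^p`.
-/

open Finset Equiv

namespace Equiv.Perm

variable {α : Type*} [Fintype α] [DecidableEq α]

theorem card_filter_forall_mem_apply_eq (T : Finset α) :
    #{π : Perm α | ∀ a ∈ T, π a = a} = (Fintype.card α - #T).factorial := by
  rw [← Fintype.card_subtype, ← Fintype.card_congr ((Perm.subtypeEquivSubtypePerm (· ∉ T)).trans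
    (Equiv.subtypeEquivRight fun π => by simp only [not_not])), Fintype.card_perm,
    Fintype.card_subtype_compl, Fintype.card_coe]

theorem card_filter_le_card_fixedPoints_mul_factorial_le (k : ℕ) :
    #{π : Perm α | k ≤ #{a | π a = a}} * k.factorial ≤ (Fintype.card α).factorial := by
  set N := Fintype.card α
  have hcover : ({π : Perm α | k ≤ #{a | π a = a}} : Finset (Perm α))
      ⊆ (powersetCard k univ).biUnion fun T => {π : Perm α | ∀ a ∈ T, π a = a} := by
    intro π hπ
    obtain ⟨T, hT, hTk⟩ := exists_subset_card_eq (mem_filter.1 hπ).2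
    refine mem_biUnion.2 ⟨T, mem_powersetCard.2 ⟨subset_univ T, hTk⟩, ?_⟩
    simpa using fun a ha => (mem_filter.1 (hT ha)).2
  have hcount : #{π : Perm α | k ≤ #{a | π a = a}} ≤ N.choose k * (N - k).factorial :=
    calc _ ≤ _ := card_le_card hcover
      _ ≤ ∑ T ∈ powersetCard k univ, #{π : Perm α | ∀ a ∈ T, π a = a} := card_biUnion_le
      _ = N.choose k * (N - k).factorial := by
        rw [sum_congr rfl fun T hT => by
          rw [card_filter_forall_mem_apply_eq, (mem_powersetCard.1 hT).2], sum_const,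
          card_powersetCard, card_univ, smul_eq_mul]
  rcases le_or_gt k N with hk | hk
  · calc _ ≤ N.choose k * (N - k).factorial * k.factorial := Nat.mul_le_mul_right _ hcount
      _ = N.factorial := by rw [mul_right_comm, Nat.choose_mul_factorial_mul_factorial hk]
  · rw [Nat.choose_eq_zero_of_lt hk, zero_mul, Nat.le_zero] at hcount
    simp [hcount]

theorem card_filter_le_card_fixedPoints_le_div (k : ℕ) :
    (#{π : Perm α | k ≤ #{a | π a = a}} : ℝ) ≤ (Fintype.card α).factorial / k.factorial := by
  rw [le_div_iff₀ (by positivity)]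
  exact_mod_cast card_filter_le_card_fixedPoints_mul_factorial_le k

theorem card_filter_le_prod_card_filter_le_card_fixedPoints {ι : Type*} [Fintype ι]
    [DecidableEq ι] (z c : ι) (k : ι → ℕ) :
    #{σ : ι → Perm α | σ z = 1 ∧ ∀ i ≠ c, k i ≤ #{u | (σ i * (σ c)⁻¹) u = u}}
      ≤ ∏ i ∈ univ.erase c, #{ρ : Perm α | k i ≤ #{u | ρ u = u}} := by
  set A : Finset (ι → Perm α) :=
    {σ : ι → Perm α | σ z = 1 ∧ ∀ i ≠ c, k i ≤ #{u | (σ i * (σ c)⁻¹) u = u}}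
  set S : ι → Finset (Perm α) := fun i =>
    if i = c then {1} else ({ρ : Perm α | k i ≤ #{u | ρ u = u}} : Finset (Perm α))
  -- Recentring at `c` loses nothing, since `σ i = τ i * (τ z)⁻¹` for `τ i = σ i * (σ c)⁻¹`.
  have hinj : Set.InjOn (fun σ : ι → Perm α => fun i => σ i * (σ c)⁻¹) A := by
    intro σ hσ σ' hσ' h
    have hσz : σ z = 1 := (mem_filter.1 hσ).2.1
    have hσ'z : σ' z = 1 := (mem_filter.1 hσ').2.1
    have hc : σ c = σ' c := by simpa [hσz, hσ'z] using congrFun h z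
    funext i
    simpa [hc] using congrFun h i
  have hmaps : ∀ σ ∈ A, (fun i => σ i * (σ c)⁻¹) ∈ Fintype.piFinset S := by
    intro σ hσ
    refine Fintype.mem_piFinset.2 fun i => ?_
    by_cases hi : i = c
    · simp [S, hi]
    · simpa [S, hi] using (mem_filter.1 hσ).2.2 i hi
  calc #A ≤ #(Fintype.piFinset S) := card_le_card_of_injOn _ hmaps hinj
    _ = ∏ i, #(S i) := Fintype.card_piFinset S
    _ = _ := by
      rw [← mul_prod_erase univ _ (mem_univ c)]
      simp only [S, if_pos, card_singleton, one_mul]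
      exact prod_congr rfl fun i hi => by rw [if_neg (ne_of_mem_erase hi)]

end Equiv.Perm

theorem Finset.prod_filter_fst_ne_snd {ι M : Type*} [Fintype ι] [DecidableEq ι] [CommMonoid M]
    (f : ι → ι → M) :
    ∏ ij ∈ univ.filter (fun ij : ι × ι => ij.1 ≠ ij.2), f ij.1 ij.2
      = ∏ c, ∏ i ∈ univ.erase c, f c i := by
  rw [prod_filter, Fintype.prod_prod_type]
  exact prod_congr rfl fun c _ => by rw [← prod_filter, filter_ne]

theorem Real.prod_rpow_inv_card_le {ι : Type*} [Fintype ι] {x : ι → ℝ} (hx : ∀ i, 0 ≤ x i)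
    {c : ι} (hc : ∀ i, x i ≤ x c) :
    (∏ i, x i) ^ ((1 : ℝ) / Fintype.card ι) ≤ x c := by
  have hprod : ∏ i, x i ≤ x c ^ Fintype.card ι := by
    calc ∏ i, x i ≤ ∏ _i : ι, x c := prod_le_prod (fun i _ => hx i) fun i _ => hc i
      _ = x c ^ Fintype.card ι := by rw [prod_const, card_univ]
  calc (∏ i, x i) ^ ((1 : ℝ) / Fintype.card ι)
      ≤ (x c ^ Fintype.card ι) ^ ((Fintype.card ι : ℝ)⁻¹) := by
        rw [one_div]
        exact Real.rpow_le_rpow (prod_nonneg fun i _ => hx i) hprod (by positivity)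
    _ = x c := Real.pow_rpow_inv_natCast (hx c) (Fintype.card_pos_iff.2 ⟨c⟩).ne'

/-- Counting bound (Theorem "usable"): the number of tuples `σ ∈ {Id} × S_n^{p-1}`
with `d_{ij}(σ) ≥ d_{ij}` for all `i ≠ j` is at most
`(n!)^{p-1} / (∏_{i≠j} d_{ij}!)^{1/p}`. -/
theorem stmt6 (p n : ℕ) (hp : 2 ≤ p)
    (d : Fin p → Fin p → ℕ) :
    ((Finset.univ.filter (fun σ : Fin p → Equiv.Perm (Fin n) =>
        σ ⟨0, by omega⟩ = 1 ∧ ∀ i j, i ≠ j →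
          d i j ≤ (Finset.univ.filter (fun u : Fin n => (σ j * (σ i)⁻¹) u = u)).card)).card : ℝ)
      ≤ ((n.factorial : ℝ)) ^ (p - 1) /
        (∏ ij ∈ Finset.univ.filter (fun ij : Fin p × Fin p => ij.1 ≠ ij.2),
            (((d ij.1 ij.2).factorial : ℝ))) ^ ((1 : ℝ) / p) := by
  set z : Fin p := ⟨0, by omega⟩
  set R : Fin p → ℝ := fun c => ∏ i ∈ univ.erase c, ((d c i).factorial : ℝ)
  have : Nonempty (Fin p) := ⟨z⟩
  obtain ⟨c, hc⟩ := Finite.exists_max R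
  calc _ ≤ (#{σ : Fin p → Perm (Fin n) | σ z = 1 ∧
          ∀ i ≠ c, d c i ≤ #{u | (σ i * (σ c)⁻¹) u = u}} : ℝ) := by
        refine Nat.cast_le.2 (card_le_card fun σ => ?_)
        simp only [mem_filter, mem_univ, true_and]
        exact fun hσ => ⟨hσ.1, fun i hi => hσ.2 c i hi.symm⟩
    _ ≤ ∏ i ∈ univ.erase c, (#{ρ : Perm (Fin n) | d c i ≤ #{u | ρ u = u}} : ℝ) := by
        have h := Perm.card_filter_le_prod_card_filter_le_card_fixedPoints (α := Fin n) z c (d c)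
        exact_mod_cast h
    _ ≤ ∏ i ∈ univ.erase c, ((n.factorial : ℝ) / (d c i).factorial) := by
        gcongr with i
        simpa using Perm.card_filter_le_card_fixedPoints_le_div (α := Fin n) (d c i)
    _ = (n.factorial : ℝ) ^ (p - 1) / R c := by
        rw [prod_div_distrib, prod_const, card_erase_of_mem (mem_univ c), card_univ,
          Fintype.card_fin]
    _ ≤ _ := by
        refine div_le_div_of_nonneg_left (by positivity) (by positivity) ?_
        rw [prod_filter_fst_ne_snd fun i j => ((d i j).factorial : ℝ)]
        simpa using Real.prod_rpow_inv_card_le (fun c' => prod_nonneg fun i _ => by positivity) hc
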